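/- arXiv:math/0502402 — 2 statements merged into one kernel-verified Lean document; each statement's English description precedes it below -/
import Mathlib

section
/- For n ≥ 2 let C_n ⊂ ℝ² be the boundary of the triangle with vertices (0,0), (1/n, 1), and (1/n,1) + 10^{-10n}·(n,−1), let X = ⋃_{n≥2} C_n, and let Y be the closure of X in ℝ². Then Y = X ∪ α where α is the line segment from (0,0) to (0,1). -/
/-!
Every triangle `C_n` has `(0,0)` as a vertex and its other two vertices have abscissa at
most `2/n` (because `n² ≤ 10^{10n}`), so all of `X` lies in the closed strip `[0,∞) × [0,1]`
and only finitely many `C_n` reach the half-plane `x ≥ c` for any `c > 0`. Hence a limit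
point of `X` off the `y`-axis lies in a finite, closed union of triangles, while a limit
point on the `y`-axis lies in `α`. Conversely, `(0,t) = lim t • (1/n, 1)` is a limit of
points of the edges `[(0,0), (1/n,1)]`.
-/

open unitInterval Topology

noncomputable section

/-- The topological fundamental group: path components of the based loop space
(compact-open topology), with the quotient topology. -/
def piTop (Z : Type*) [TopologicalSpace Z] (z : Z) : Type _ :=
  Quotient (pathSetoid (Path z z))

instance (Z : Type*) [TopologicalSpace Z] (z : Z) : TopologicalSpace (piTop Z z) :=
  instTopologicalSpaceQuotient

/-- The class of a loop in the topological fundamental group. -/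
def piMk {Z : Type*} [TopologicalSpace Z] {z : Z} (γ : Path z z) : piTop Z z :=
  Quotient.mk _ γ

/-- The common basepoint `p = (0,0)`. -/
def pp : ℝ × ℝ := (0, 0)

/-- The apex `(1/n, 1)` of the `n`-th triangle. -/
def apex (n : ℕ) : ℝ × ℝ := (1 / (n : ℝ), 1)

/-- The third vertex `(1/n,1) + 10^{-10n}·(n,-1)` of the `n`-th triangle. -/
def apex' (n : ℕ) : ℝ × ℝ := apex n + (((10 : ℝ) ^ (10 * n))⁻¹) • ((n : ℝ), -1)

/-- The boundary of the `n`-th triangle, i.e. the union of its three edges. -/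
def Cset (n : ℕ) : Set (ℝ × ℝ) :=
  segment ℝ pp (apex n) ∪ segment ℝ (apex n) (apex' n) ∪ segment ℝ (apex' n) pp

/-- The bouquet `X = ⋃_{n ≥ 2} C_n`. -/
def Xset : Set (ℝ × ℝ) := ⋃ n ∈ {n : ℕ | 2 ≤ n}, Cset n

/-- The segment `α` from `(0,0)` to `(0,1)`. -/
def alphaSet : Set (ℝ × ℝ) := segment ℝ (0, 0) (0, 1)

/-- The compactification `Y = X ∪ α`. -/
def Yset : Set (ℝ × ℝ) := Xset ∪ alphaSet

lemma pp_mem_C (n : ℕ) : pp ∈ Cset n := Or.inl (Or.inl (left_mem_segment ℝ _ _))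

lemma pp_mem_X : pp ∈ Xset :=
  Set.mem_biUnion (by norm_num : (2 : ℕ) ∈ {n : ℕ | 2 ≤ n}) (pp_mem_C 2)

lemma X_sub_Y : Xset ⊆ Yset := Set.subset_union_left

lemma pp_mem_Y : pp ∈ Yset := X_sub_Y pp_mem_X

/-- The basepoint of `X`. -/
def pX : ↥Xset := ⟨pp, pp_mem_X⟩

/-- The basepoint of `Y`. -/
def pY : ↥Yset := ⟨pp, pp_mem_Y⟩

/-- The inclusion `X ↪ Y` as a continuous map between subspaces. -/
def jXY : C(↥Xset, ↥Yset) := ⟨Set.inclusion X_sub_Y, continuous_inclusion X_sub_Y⟩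

lemma jXY_pX : jXY pX = pY := rfl

open Set Filter

lemma isClosed_segment {E : Type*} [AddCommGroup E] [Module ℝ E] [TopologicalSpace E]
    [IsTopologicalAddGroup E] [ContinuousSMul ℝ E] [T2Space E] (x y : E) :
    IsClosed (segment ℝ x y) :=
  convexHull_pair (𝕜 := ℝ) x y ▸ (toFinite _).isClosed_convexHull ℝ

lemma isClosed_Cset (n : ℕ) : IsClosed (Cset n) :=
  ((isClosed_segment _ _).union (isClosed_segment _ _)).union (isClosed_segment _ _)

lemma Cset_subset_of_convex {n : ℕ} {s : Set (ℝ × ℝ)} (hs : Convex ℝ s)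
    (h₀ : pp ∈ s) (h₁ : apex n ∈ s) (h₂ : apex' n ∈ s) : Cset n ⊆ s :=
  union_subset (union_subset (hs.segment_subset h₀ h₁) (hs.segment_subset h₁ h₂))
    (hs.segment_subset h₂ h₀)

lemma Xset_subset_of_convex {s : Set (ℝ × ℝ)} (hs : Convex ℝ s)
    (h₀ : pp ∈ s) (h₁ : ∀ n, apex n ∈ s) (h₂ : ∀ n, apex' n ∈ s) : Xset ⊆ s :=
  iUnion₂_subset fun _ _ ↦ Cset_subset_of_convex hs h₀ (h₁ _) (h₂ _)

lemma apex'_eq (n : ℕ) :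
    apex' n = (1 / (n : ℝ) + n * ((10 : ℝ) ^ (10 * n))⁻¹, 1 - ((10 : ℝ) ^ (10 * n))⁻¹) := by
  simp only [apex', apex, Prod.smul_mk, smul_eq_mul, Prod.mk_add_mk, Prod.mk.injEq]
  constructor <;> ring

lemma sq_le_ten_pow (n : ℕ) : n ^ 2 ≤ 10 ^ (10 * n) :=
  calc n ^ 2 ≤ (10 ^ n) ^ 2 := Nat.pow_le_pow_left (Nat.lt_pow_self (by norm_num)).le 2
    _ = 10 ^ (2 * n) := by rw [← pow_mul, mul_comm]
    _ ≤ 10 ^ (10 * n) := Nat.pow_le_pow_right (by norm_num) (by omega)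

lemma Xset_subset_Ici_prod_Icc : Xset ⊆ Ici 0 ×ˢ Icc 0 1 := by
  refine Xset_subset_of_convex ((convex_Ici 0).prod (convex_Icc 0 1)) ?_ ?_ ?_
  · simp [pp]
  · exact fun n ↦ by simp [apex]
  · intro n
    simp only [apex'_eq, mem_prod, mem_Ici, mem_Icc, sub_nonneg, sub_le_self_iff]
    exact ⟨by positivity, inv_le_one_of_one_le₀ (one_le_pow₀ (by norm_num)), by positivity⟩

lemma Cset_subset_fst_le (n : ℕ) : Cset n ⊆ {x | x.1 ≤ 2 / n} := by
  have hε : (n : ℝ) * ((10 : ℝ) ^ (10 * n))⁻¹ ≤ 1 / n := by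
    rcases n.eq_zero_or_pos with rfl | hn
    · simp
    rw [← div_eq_mul_inv, div_le_div_iff₀ (by positivity) (by positivity), one_mul, ← sq]
    exact_mod_cast sq_le_ten_pow n
  have h₁ : 1 / (n : ℝ) ≤ 2 / n := by gcongr; norm_num
  refine Cset_subset_of_convex ((convex_Iic _).linear_preimage (LinearMap.fst ℝ ℝ ℝ)) ?_ ?_ ?_
  · show (0 : ℝ) ≤ 2 / n
    positivity
  · exact h₁
  · show (apex' n).1 ≤ 2 / n
    rw [apex'_eq]
    linarith [show 2 / (n : ℝ) = 1 / n + 1 / n by ring]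

lemma Xset_subset_biUnion_union {N : ℕ} (hN : 0 < N) :
    Xset ⊆ (⋃ n ∈ Finset.Ico 2 N, Cset n) ∪ {x | x.1 ≤ 2 / N} := by
  refine iUnion₂_subset fun n (hn : 2 ≤ n) x hx ↦ ?_
  rcases lt_or_ge n N with hnN | hNn
  · exact Or.inl (mem_biUnion (Finset.mem_Ico.2 ⟨hn, hnN⟩) hx)
  · exact Or.inr <| show x.1 ≤ 2 / N from (Cset_subset_fst_le n hx).trans <|
      div_le_div_of_nonneg_left zero_le_two (Nat.cast_pos.2 hN) (Nat.cast_le.2 hNn)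

lemma mem_Xset_of_mem_closure {q : ℝ × ℝ} (hq : q ∈ closure Xset) (hpos : 0 < q.1) :
    q ∈ Xset := by
  obtain ⟨N, hN⟩ := exists_nat_gt (2 / q.1)
  have hN₀ : (0 : ℝ) < N := (div_pos two_pos hpos).trans hN
  have hclosed : IsClosed ((⋃ n ∈ Finset.Ico 2 N, Cset n) ∪ {x : ℝ × ℝ | x.1 ≤ 2 / N}) :=
    (isClosed_biUnion_finset fun n _ ↦ isClosed_Cset n).union
      (isClosed_le continuous_fst continuous_const)
  rcases closure_minimal (Xset_subset_biUnion_union (Nat.cast_pos.1 hN₀)) hclosed hq with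
    hF | hG
  · obtain ⟨n, hn, hqn⟩ := mem_iUnion₂.1 hF
    exact mem_biUnion (Finset.mem_Ico.1 hn).1 hqn
  · exact absurd hG (not_le.2 ((div_lt_comm₀ hpos hN₀).1 hN))

lemma alphaSet_eq : alphaSet = {0} ×ˢ Icc 0 1 := by
  rw [alphaSet, ← Prod.image_mk_segment_right, segment_eq_Icc zero_le_one, singleton_prod]

lemma tendsto_apex : Tendsto apex atTop (𝓝 (0, 1)) :=
  tendsto_one_div_atTop_nhds_zero_nat.prodMk_nhds tendsto_const_nhds

lemma smul_apex_mem_Xset {n : ℕ} (hn : 2 ≤ n) {t : ℝ} (ht : t ∈ Icc (0 : ℝ) 1) :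
    t • apex n ∈ Xset :=
  mem_biUnion hn (Or.inl (Or.inl ⟨1 - t, t, by linarith [ht.2], ht.1, by ring, by simp [pp]⟩))

lemma alphaSet_subset_closure_Xset : alphaSet ⊆ closure Xset := by
  rw [alphaSet_eq]
  rintro ⟨_, t⟩ ⟨rfl : _ = (0 : ℝ), ht⟩
  have hlim : Tendsto (fun n ↦ t • apex n) atTop (𝓝 ((0 : ℝ), t)) := by
    simpa using tendsto_apex.const_smul t
  exact mem_closure_of_tendsto hlim
    ((eventually_ge_atTop 2).mono fun n hn ↦ smul_apex_mem_Xset hn ht)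

/-- the closure of `X = ⋃_{n ≥ 2} C_n` in `ℝ²` is `X ∪ α`, where
`α` is the segment from `(0,0)` to `(0,1)`. -/
theorem closure_Xset_eq : closure Xset = Xset ∪ alphaSet := by
  refine Subset.antisymm (fun q hq ↦ ?_) (union_subset subset_closure alphaSet_subset_closure_Xset)
  have hstrip : q ∈ Ici 0 ×ˢ Icc 0 1 :=
    closure_minimal Xset_subset_Ici_prod_Icc (isClosed_Ici.prod isClosed_Icc) hq
  rcases (mem_Ici.1 hstrip.1).eq_or_lt with h₀ | hpos
  · exact Or.inr (alphaSet_eq ▸ ⟨h₀.symm, hstrip.2⟩)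
  · exact Or.inl (mem_Xset_of_mem_closure hq hpos)
end
end

section
/- A loop f in the bouquet X = ⋃_{n≥2} C_n based at p = (0,0) is null-homotopic in X if and only if it is null-homotopic in Y = X ∪ α, where α is the segment from (0,0) to (0,1). -/
open unitInterval Topology

noncomputable section

/-!
Given a null-homotopy `F : I × I → Y`, collapse `α` to `p`: let `G = p` on `F⁻¹(α)` and
`G = F` elsewhere. Since `X ∩ α = {p}`, `G` is again a null-homotopy of the same loop, now in
`X`. It is continuous off `F⁻¹(α)` because `α` is closed, and at points sent to `p` because it
only takes the values `p` and `F`. At a point sent to `α \ {p}`, a connected neighbourhood is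
mapped into a connected set of positive height through a point of `α`, and such a set stays in
`α`: the slope `x / y` is `0` on `α`, exceeds `2 / (2n + 1)` on `C_n`, and never equals
`2 / (2n + 1)` on any `C_m`.
-/

open Set

instance : LocallyPathConnectedSpace I := (convex_Icc (0 : ℝ) 1).locallyPathConnectedSpace

section Collapse

variable {Z Y : Type*} [TopologicalSpace Z] [TopologicalSpace Y]

theorem Continuous.ite_mem_of_connectedComponentIn_subset [LocallyConnectedSpace Z] {F : Z → Y}
    (hF : Continuous F) {A : Set Y} [DecidablePred (· ∈ A)] (hA : IsClosed A) (p : Y)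
    (hA_loc : ∀ a ∈ A, a ≠ p → ∃ N ∈ 𝓝 a, connectedComponentIn N a ⊆ A) :
    Continuous fun z => if F z ∈ A then p else F z := by
  refine continuous_iff_continuousAt.2 fun s => ?_
  by_cases hs : F s ∈ A
  swap
  · refine hF.continuousAt.congr ?_
    filter_upwards [hF.continuousAt.preimage_mem_nhds (hA.isOpen_compl.mem_nhds hs)] with z hz
    exact (if_neg hz).symm
  by_cases hsp : F s = p
  · simp only [ContinuousAt, if_pos hs]
    intro U hU
    rw [Filter.mem_map]
    filter_upwards [hF.continuousAt.preimage_mem_nhds (hsp ▸ hU)] with z hz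
    simp only [mem_preimage] at hz ⊢
    split_ifs
    exacts [mem_of_mem_nhds hU, hz]
  · obtain ⟨N, hN, hNA⟩ := hA_loc _ hs hsp
    set V := connectedComponentIn (F ⁻¹' N) s
    have hV : V ∈ 𝓝 s := connectedComponentIn_mem_nhds (hF.continuousAt hN)
    have hFV : F '' V ⊆ A :=
      ((isPreconnected_connectedComponentIn.image F hF.continuousOn).subset_connectedComponentIn
        (mem_image_of_mem F (mem_of_mem_nhds hV))
        (image_subset_iff.2 (connectedComponentIn_subset _ _))).trans hNA
    refine (continuousAt_const (y := p)).congr ?_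
    filter_upwards [hV] with z hz
    exact (if_pos (hFV (mem_image_of_mem F hz))).symm

end Collapse

theorem Path.Homotopic.of_map_of_leftInverse {X Y : Type*} [TopologicalSpace X]
    [TopologicalSpace Y] {x₀ x₁ : X} {γ γ' : Path x₀ x₁} (j : C(X, Y)) {r : Y → X}
    (hr : Function.LeftInverse r j) (H : (γ.map j.continuous).Homotopy (γ'.map j.continuous))
    (hrH : Continuous (r ∘ H)) : γ.Homotopic γ' :=
  ⟨{ toFun := r ∘ H
     continuous_toFun := hrH
     map_zero_left t := by simp [hr _]
     map_one_left t := by simp [hr _]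
     prop' t x hx := by simp [H.eq_fst t hx, hr _] }⟩

-- The upper slope `3 / (3n - 1)` is just above the slope `1 / n` of the apex, leaving room for
-- the nearby third vertex, yet below `2 / (2n - 1)`, which thus separates the wedges of `C_n`
-- and `C_(n-1)`.
def wedge (n : ℕ) : Set (ℝ × ℝ) := {z | z.2 ≤ n * z.1 ∧ (3 * n - 1) * z.1 ≤ 3 * z.2}

lemma convex_wedge (n : ℕ) : Convex ℝ (wedge n) := by
  intro x hx y hy a b ha hb _
  simp only [wedge, mem_ofPred_eq, Prod.fst_add, Prod.snd_add, Prod.smul_fst, Prod.smul_snd,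
    smul_eq_mul] at *
  constructor
  · nlinarith [mul_le_mul_of_nonneg_left hx.1 ha, mul_le_mul_of_nonneg_left hy.1 hb]
  · nlinarith [mul_le_mul_of_nonneg_left hx.2 ha, mul_le_mul_of_nonneg_left hy.2 hb]

lemma ten_mul_cube_le_ten_pow {n : ℕ} (hn : 0 < n) : 10 * n ^ 3 ≤ 10 ^ (10 * n) :=
  calc 10 * n ^ 3 ≤ 10 * (10 ^ n) ^ 3 := by gcongr; exact (Nat.lt_pow_self (by norm_num)).le
    _ = 10 ^ (3 * n + 1) := by ring
    _ ≤ 10 ^ (10 * n) := Nat.pow_le_pow_right (by norm_num) (by omega)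

lemma Cset_subset_wedge {n : ℕ} (hn : 0 < n) : Cset n ⊆ wedge n := by
  have hn' : (1 : ℝ) ≤ n := by exact_mod_cast hn
  have hu : 1 / (n : ℝ) * n = 1 := by field_simp
  have hu0 : 0 ≤ 1 / (n : ℝ) := by positivity
  have hp : pp ∈ wedge n := by simp [wedge, pp]
  have ha : apex n ∈ wedge n := by
    simp only [wedge, apex, mem_ofPred_eq]
    constructor <;> nlinarith
  have ha' : apex' n ∈ wedge n := by
    have hδ : 0 < ((10 : ℝ) ^ (10 * n))⁻¹ := by positivity
    have hδn : ((10 : ℝ) ^ (10 * n))⁻¹ * (10 * n ^ 3) ≤ 1 := by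
      rw [inv_mul_le_iff₀ (by positivity), mul_one]
      exact_mod_cast ten_mul_cube_le_ten_pow hn
    simp only [wedge, apex', apex, mem_ofPred_eq, Prod.fst_add, Prod.snd_add, Prod.smul_fst,
      Prod.smul_snd, smul_eq_mul]
    generalize ((10 : ℝ) ^ (10 * n))⁻¹ = δ at hδ hδn ⊢
    have hcube : n * (3 * n ^ 2 - n + 3) ≤ 10 * (n : ℝ) ^ 3 := by nlinarith
    constructor
    · nlinarith
    · nlinarith [mul_nonneg hu0 (by nlinarith : 0 ≤ 1 - δ * (n * (3 * n ^ 2 - n + 3)))]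
  have hW := convex_wedge n
  exact union_subset (union_subset (hW.segment_subset hp ha) (hW.segment_subset ha ha'))
    (hW.segment_subset ha' hp)

lemma two_div_lt_div_of_mem_wedge {n : ℕ} {z : ℝ × ℝ} (hz : z ∈ wedge n) (h2 : 0 < z.2) :
    2 / (2 * n + 1) < z.1 / z.2 := by
  have hz1 : 0 < z.1 := by nlinarith [hz.1]
  rw [div_lt_div_iff₀ (by positivity) h2]
  nlinarith [hz.1]

lemma div_ne_two_div_of_mem_wedge {m : ℕ} (n : ℕ) {z : ℝ × ℝ} (hz : z ∈ wedge m)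
    (h2 : 0 < z.2) : z.1 / z.2 ≠ 2 / (2 * n + 1) := by
  intro h
  rw [div_eq_div_iff h2.ne' (by positivity)] at h
  have hz1 : 0 < z.1 := by nlinarith
  have hlow : (2 * n + 1 : ℝ) ≤ 2 * m := by nlinarith [hz.1]
  have hup : (6 * m : ℝ) ≤ 6 * n + 5 := by nlinarith [hz.2]
  have hlow' : 2 * n + 1 ≤ 2 * m := by exact_mod_cast hlow
  have hup' : 6 * m ≤ 6 * n + 5 := by exact_mod_cast hup
  omega

lemma alphaSet_subset : alphaSet ⊆ {z | z.1 = 0 ∧ 0 ≤ z.2} := by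
  intro z hz
  have hz' := Prod.segment_subset _ _ hz
  simp only [segment_same, segment_eq_Icc (𝕜 := ℝ) (zero_le_one : (0 : ℝ) ≤ 1), mem_prod,
    mem_singleton_iff, mem_Icc] at hz'
  exact ⟨hz'.1, hz'.2.1⟩

lemma isClosed_alphaSet : IsClosed alphaSet := by
  rw [alphaSet, ← convexHull_pair (𝕜 := ℝ)]
  exact ((toFinite _).isCompact_convexHull (𝕜 := ℝ)).isClosed

lemma exists_mem_Cset_of_mem_Xset {z : ℝ × ℝ} (hz : z ∈ Xset) :
    ∃ n, 2 ≤ n ∧ z ∈ Cset n := by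
  simpa [Xset] using hz

lemma eq_pp_of_mem_Xset_of_mem_alphaSet {z : ℝ × ℝ} (hX : z ∈ Xset) (hα : z ∈ alphaSet) :
    z = pp := by
  obtain ⟨n, hn, hz⟩ := exists_mem_Cset_of_mem_Xset hX
  have hW := Cset_subset_wedge (by omega) hz
  obtain ⟨h1, h2⟩ := alphaSet_subset hα
  simp only [wedge, mem_ofPred_eq, h1, mul_zero] at hW
  exact Prod.ext h1 (by simp only [pp]; linarith [hW.1])

lemma connectedComponentIn_subset_alphaSet {a : Yset} (ha : (a : ℝ × ℝ) ∈ alphaSet) :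
    connectedComponentIn {y : Yset | 0 < (y : ℝ × ℝ).2} a ⊆ Subtype.val ⁻¹' alphaSet := by
  set N := {y : Yset | 0 < (y : ℝ × ℝ).2}
  set C := connectedComponentIn N a
  by_cases haN : a ∈ N
  swap
  · simp [C, connectedComponentIn_eq_empty haN]
  have hCN : C ⊆ N := connectedComponentIn_subset N a
  set ρ : Yset → ℝ := fun y => (y : ℝ × ℝ).1 / (y : ℝ × ℝ).2
  have hρC : IsPreconnected (ρ '' C) :=
    isPreconnected_connectedComponentIn.image ρ
      ((by fun_prop : Continuous fun y : Yset => (y : ℝ × ℝ).1).continuousOn.div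
        (by fun_prop : Continuous fun y : Yset => (y : ℝ × ℝ).2).continuousOn
        fun y hy => (hCN hy).ne')
  have hρa : ρ a = 0 := by simp [ρ, (alphaSet_subset ha).1]
  intro y hy
  by_contra hyα
  obtain ⟨n, hn, hyn⟩ := exists_mem_Cset_of_mem_Xset (y.2.resolve_right hyα)
  have hgap : (2 / (2 * n + 1) : ℝ) ∈ ρ '' C :=
    hρC.Icc_subset ⟨a, mem_connectedComponentIn haN, hρa⟩ ⟨y, hy, rfl⟩
      ⟨by positivity,
        (two_div_lt_div_of_mem_wedge (Cset_subset_wedge (by omega) hyn) (hCN hy)).le⟩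
  obtain ⟨w, hwC, hw⟩ := hgap
  rcases w.2 with hwX | hwα
  · obtain ⟨m, hm, hwm⟩ := exists_mem_Cset_of_mem_Xset hwX
    exact div_ne_two_div_of_mem_wedge n (Cset_subset_wedge (by omega) hwm) (hCN hwC) hw
  · have : ρ w = 0 := by simp [ρ, (alphaSet_subset hwα).1]
    have : (0 : ℝ) < 2 / (2 * n + 1) := by positivity
    linarith

open Classical in
def collapseAlpha (y : Yset) : Xset :=
  if hy : (y : ℝ × ℝ) ∈ alphaSet then pX else ⟨y, y.2.resolve_right hy⟩

lemma collapseAlpha_jXY (x : Xset) : collapseAlpha (jXY x) = x := by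
  unfold collapseAlpha
  split_ifs with hx
  · exact Subtype.ext (eq_pp_of_mem_Xset_of_mem_alphaSet x.2 hx).symm
  · rfl

open Classical in
lemma jXY_collapseAlpha (y : Yset) :
    jXY (collapseAlpha y) = if (y : ℝ × ℝ) ∈ alphaSet then pY else y := by
  unfold collapseAlpha
  split_ifs <;> rfl

lemma Continuous.collapseAlpha_comp {Z : Type*} [TopologicalSpace Z] [LocallyConnectedSpace Z]
    {F : Z → Yset} (hF : Continuous F) : Continuous (collapseAlpha ∘ F) := by
  classical
  rw [(Topology.IsEmbedding.inclusion X_sub_Y).isInducing.continuous_iff]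
  have : inclusion X_sub_Y ∘ collapseAlpha ∘ F =
      fun z => if F z ∈ Subtype.val ⁻¹' alphaSet then pY else F z :=
    funext fun z => jXY_collapseAlpha (F z)
  rw [this]
  refine hF.ite_mem_of_connectedComponentIn_subset
    (isClosed_alphaSet.preimage continuous_subtype_val) pY
    fun a ha hap => ⟨_, ?_, connectedComponentIn_subset_alphaSet ha⟩
  obtain ⟨h1, h2⟩ := alphaSet_subset ha
  have : 0 < (a : ℝ × ℝ).2 := h2.lt_of_ne fun h => hap (Subtype.ext (Prod.ext h1 h.symm))
  exact (isOpen_lt continuous_const (by fun_prop)).mem_nhds this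

/-- a loop in the bouquet `X` based at `p` is null-homotopic in `X`
if and only if it is null-homotopic in `Y = X ∪ α`. -/
theorem nullhomotopic_in_X_iff_nullhomotopic_in_Y (f : Path pX pX) :
    f.Homotopic (Path.refl pX) ↔
      (f.map jXY.continuous).Homotopic (Path.refl (jXY pX)) :=
  ⟨fun h => h.map jXY, fun ⟨H⟩ =>
    .of_map_of_leftInverse jXY collapseAlpha_jXY H H.continuous.collapseAlpha_comp⟩
end
end
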